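/- For every n ≥ 5, the complement of the cycle C_n satisfies ρ⊥(C̄_n) = n − 2: the complement of C_n admits a faithful orthogonal representation in ℝ^{n−2} and none in any smaller dimension. -/

import Mathlib

/-- A faithful orthogonal representation (FOR) of the graph `G` in dimension `d`:
an injective map assigning a nonzero vector of `ℝ^d` to each vertex, such that
distinct vertices are adjacent iff their vectors are orthogonal. -/
def IsFOR {V : Type*} (G : SimpleGraph V) (d : ℕ)
    (σ : V → EuclideanSpace ℝ (Fin d)) : Prop :=
  Function.Injective σ ∧ (∀ v, σ v ≠ 0) ∧
    ∀ i j : V, i ≠ j → (G.Adj i j ↔ inner ℝ (σ i) (σ j) = (0 : ℝ))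

/-- `G` has a faithful orthogonal representation in dimension `d`. -/
def HasFOR {V : Type*} (G : SimpleGraph V) (d : ℕ) : Prop :=
  ∃ σ : V → EuclideanSpace ℝ (Fin d), IsFOR G d σ

/-- The faithful orthogonal rank `ρ⊥(G)`: the minimum dimension admitting a FOR. -/
noncomputable def forRank {V : Type*} (G : SimpleGraph V) : ℕ :=
  sInf {d | HasFOR G d}

/-!
Lower bound: in a FOR of `C̄ₙ`, the vectors of the path vertices `0, …, n - 3` are linearly
independent. Pair vertex `k` with its predecessor `w k` on the cycle (`n - 1` for `k = 0`):
`w k` is a cycle neighbour of `k` but of no later path vertex, so the matrix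
`⟪σ (w k), σ t⟫` is triangular with nonzero diagonal.

Upper bound: in `ℝ^(n-2)` send vertex `i ≤ n - 2` to `e_i - e_{i+1}` (with `e_0 = e_{n-1} = 0`)
and vertex `n - 1` to the all-ones vector. For such an orthogonality-faithful map, injectivity
and nonvanishing come for free, since `Cₙ` has no two vertices with the same neighbourhood
when `n ≥ 5`.
-/

open SimpleGraph

theorem linearIndependent_of_triangular {K E ι : Type*} [Field K] [AddCommGroup E]
    [Module K E] [LinearOrder ι] [Fintype ι] (v : ι → E) (f : ι → Module.Dual K E)
    (hdiag : ∀ i, f i (v i) ≠ 0) (hlt : ∀ i j, i < j → f i (v j) = 0) :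
    LinearIndependent K v := by
  rw [Fintype.linearIndependent_iff]
  intro g hg
  let M : Matrix ι ι K := Matrix.of fun i j => f i (v j)
  have hM : M.IsLowerTriangular := fun i j hij => hlt i j hij
  have hdet : M.det ≠ 0 := by
    rw [Matrix.det_of_isLowerTriangular M hM]
    exact Finset.prod_ne_zero_iff.2 fun i _ => hdiag i
  have hMg : M.mulVec g = 0 := by
    ext i
    simpa [M, Matrix.mulVec, dotProduct, mul_comm] using congrArg (f i) hg
  exact congrFun (Matrix.eq_zero_of_mulVec_eq_zero hdet hMg)

theorem IsFOR.inner_eq_zero_iff_not_adj_of_compl {V : Type*} {G : SimpleGraph V} {d : ℕ}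
    {σ : V → EuclideanSpace ℝ (Fin d)} (h : IsFOR Gᶜ d σ) {i j : V} (hij : i ≠ j) :
    inner ℝ (σ i) (σ j) = 0 ↔ ¬G.Adj i j := by
  rw [← h.2.2 i j hij, compl_adj, and_iff_right hij]

theorem IsFOR.of_inner_eq_zero_iff {V : Type*} {G : SimpleGraph V} {d : ℕ}
    {σ : V → EuclideanSpace ℝ (Fin d)}
    (horth : ∀ i j, i ≠ j → (G.Adj i j ↔ inner ℝ (σ i) (σ j) = 0))
    (hnonadj : ∀ i, ∃ j, j ≠ i ∧ ¬G.Adj i j)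
    (htwin : ∀ i j, i ≠ j → ∃ k, k ≠ i ∧ k ≠ j ∧ ¬(G.Adj k i ↔ G.Adj k j)) :
    IsFOR G d σ := by
  refine ⟨fun i j hσ => ?_, fun i hi => ?_, horth⟩
  · by_contra hij
    obtain ⟨k, hki, hkj, hk⟩ := htwin i j hij
    rw [horth k i hki, horth k j hkj, hσ] at hk
    exact hk Iff.rfl
  · obtain ⟨j, hji, hj⟩ := hnonadj i
    exact hj ((horth i j hji.symm).2 (by rw [hi, inner_zero_left]))

theorem forRank_eq_of_hasFOR {V : Type*} {G : SimpleGraph V} {d : ℕ} (h : HasFOR G d)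
    (hlt : ∀ d' < d, ¬HasFOR G d') : forRank G = d :=
  le_antisymm (Nat.sInf_le h) (le_csInf ⟨d, h⟩ fun _ hd' => not_lt.1 fun h' => hlt _ h' hd')

theorem Fin.val_sub_eq_one_iff {n : ℕ} (hn : 2 ≤ n) (a b : Fin n) :
    (a - b).val = 1 ↔ b.val + 1 = a.val ∨ (a.val = 0 ∧ b.val + 1 = n) := by
  have ha := a.isLt
  have hb := b.isLt
  rw [Fin.val_sub]
  rcases le_or_gt b.val a.val with h | h
  · rw [show n - b.val + a.val = a.val - b.val + n by omega, Nat.add_mod_right,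
      Nat.mod_eq_of_lt (by omega)]
    omega
  · rw [Nat.mod_eq_of_lt (by omega)]
    omega

theorem cycleGraph_adj_iff_val {n : ℕ} (hn : 2 ≤ n) {u v : Fin n} :
    (cycleGraph n).Adj u v ↔ u.val + 1 = v.val ∨ v.val + 1 = u.val ∨
      (u.val = 0 ∧ v.val + 1 = n) ∨ (v.val = 0 ∧ u.val + 1 = n) := by
  rw [cycleGraph_adj', Fin.val_sub_eq_one_iff hn, Fin.val_sub_eq_one_iff hn]
  omega

theorem cycleGraph_exists_adj_not_adj {n : ℕ} (hn : 5 ≤ n) {i j : Fin n} (hij : i ≠ j) :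
    ∃ k, k ≠ j ∧ (cycleGraph n).Adj k i ∧ ¬(cycleGraph n).Adj k j := by
  have hi := i.isLt
  have hj := j.isLt
  rw [ne_eq, Fin.ext_iff] at hij
  by_cases hnear : j.val = i.val + 1 ∨ j.val = i.val + 2 ∨ j.val + n = i.val + 1 ∨
      j.val + n = i.val + 2
  · refine ⟨⟨if i.val = 0 then n - 1 else i.val - 1, by split_ifs <;> omega⟩, ?_⟩
    simp only [ne_eq, Fin.ext_iff, cycleGraph_adj_iff_val (show 2 ≤ n by omega)]
    grind
  · refine ⟨⟨if i.val + 1 = n then 0 else i.val + 1, by split_ifs <;> omega⟩, ?_⟩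
    simp only [ne_eq, Fin.ext_iff, cycleGraph_adj_iff_val (show 2 ≤ n by omega)]
    grind

theorem le_of_hasFOR_compl_cycleGraph {m d : ℕ} (h : HasFOR (cycleGraph (m + 2))ᶜ d) :
    m ≤ d := by
  obtain ⟨σ, hσ⟩ := h
  let w : Fin m → Fin (m + 2) := fun k =>
    ⟨if k.val = 0 then m + 1 else k.val - 1, by split_ifs <;> omega⟩
  have hw : ∀ k, (w k).val = if k.val = 0 then m + 1 else k.val - 1 := fun _ => rfl
  have hli : LinearIndependent ℝ (fun k : Fin m => σ (Fin.castAdd 2 k)) := by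
    refine linearIndependent_of_triangular _ (fun k => innerₛₗ ℝ (σ (w k))) (fun k => ?_)
      (fun k t hkt => ?_)
    · rw [innerₛₗ_apply_apply, ne_eq, hσ.inner_eq_zero_iff_not_adj_of_compl, not_not,
        cycleGraph_adj_iff_val (by omega)] <;>
      simp only [ne_eq, Fin.ext_iff, hw, Fin.val_castAdd] <;> split_ifs <;> omega
    · rw [Fin.lt_def] at hkt
      rw [innerₛₗ_apply_apply, hσ.inner_eq_zero_iff_not_adj_of_compl,
        cycleGraph_adj_iff_val (by omega)] <;>
      simp only [ne_eq, Fin.ext_iff, hw, Fin.val_castAdd] <;> split_ifs <;> omega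
  simpa using hli.fintype_card_le_finrank

-- The 1-indexed standard basis vector `e_k` of `ℝ^m`, and `0` unless `1 ≤ k ≤ m`.
noncomputable def unitVec (m k : ℕ) : EuclideanSpace ℝ (Fin m) :=
  if h : 0 < k ∧ k ≤ m then EuclideanSpace.single ⟨k - 1, by omega⟩ 1 else 0

noncomputable def allOnes (m : ℕ) : EuclideanSpace ℝ (Fin m) :=
  WithLp.toLp 2 fun _ => 1

theorem inner_unitVec_unitVec (m a b : ℕ) :
    inner ℝ (unitVec m a) (unitVec m b) = if a = b ∧ 0 < a ∧ a ≤ m then 1 else 0 := by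
  unfold unitVec
  split_ifs <;> simp_all [EuclideanSpace.inner_single_left, Fin.ext_iff] <;> omega

theorem inner_unitVec_allOnes (m a : ℕ) :
    inner ℝ (unitVec m a) (allOnes m) = if 0 < a ∧ a ≤ m then 1 else 0 := by
  unfold unitVec
  split_ifs <;> simp [EuclideanSpace.inner_single_left, allOnes]

noncomputable def cycleComplVec (m i : ℕ) : EuclideanSpace ℝ (Fin m) :=
  if i = m + 1 then allOnes m else unitVec m i - unitVec m (i + 1)

theorem inner_cycleComplVec_eq_zero_iff {m i j : ℕ} (hm : 1 ≤ m) (hi : i ≤ m + 1)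
    (hj : j ≤ m + 1) (hij : i ≠ j) :
    inner ℝ (cycleComplVec m i) (cycleComplVec m j) = 0 ↔
      ¬(i + 1 = j ∨ j + 1 = i ∨ (i = 0 ∧ j + 1 = m + 2) ∨ (j = 0 ∧ i + 1 = m + 2)) := by
  unfold cycleComplVec
  split_ifs
  · omega
  all_goals
    simp only [inner_sub_left, inner_sub_right, inner_unitVec_unitVec, inner_unitVec_allOnes,
      real_inner_comm _ (allOnes m)]
    split_ifs <;> norm_num <;> omega

theorem hasFOR_compl_cycleGraph {m : ℕ} (hm : 3 ≤ m) : HasFOR (cycleGraph (m + 2))ᶜ m := by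
  have h2 : 2 ≤ m + 2 := by omega
  refine ⟨fun i => cycleComplVec m i, IsFOR.of_inner_eq_zero_iff (fun i j hij => ?_)
    (fun i => ⟨i + 1, ?_⟩) (fun i j hij => ?_)⟩
  · rw [compl_adj, and_iff_right hij, cycleGraph_adj_iff_val h2,
      inner_cycleComplVec_eq_zero_iff (by omega) (by omega) (by omega) (Fin.val_ne_iff.2 hij)]
  · have hadj : (cycleGraph (m + 2)).Adj i (i + 1) :=
      cycleGraph_adj.2 (Or.inr (add_sub_cancel_left i 1))
    exact ⟨hadj.ne.symm, fun h => ((compl_adj _ _ _).1 h).2 hadj⟩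
  · obtain ⟨k, hkj, hki, hkj'⟩ := cycleGraph_exists_adj_not_adj (by omega) hij
    exact ⟨k, hki.ne, hkj, by simp [hki, hkj, hkj']⟩

/-- For `n ≥ 5`, `ρ⊥(C̄_n) = n − 2`: the complement of the cycle `C_n` has a FOR
in `ℝ^(n-2)` and none in any smaller dimension. -/
theorem stmt_9 (n : ℕ) (hn : 5 ≤ n) :
    HasFOR (SimpleGraph.cycleGraph n)ᶜ (n - 2) ∧
      (∀ d < n - 2, ¬ HasFOR (SimpleGraph.cycleGraph n)ᶜ d) ∧
      forRank (SimpleGraph.cycleGraph n)ᶜ = n - 2 := by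
  obtain ⟨m, rfl⟩ : ∃ m, n = m + 2 := ⟨n - 2, by omega⟩
  rw [Nat.add_sub_cancel]
  have hupper := hasFOR_compl_cycleGraph (show 3 ≤ m by omega)
  have hlower : ∀ d < m, ¬HasFOR (cycleGraph (m + 2))ᶜ d :=
    fun d hd h => (le_of_hasFOR_compl_cycleGraph h).not_gt hd
  exact ⟨hupper, hlower, forRank_eq_of_hasFOR hupper hlower⟩
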